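/- arXiv:1511.07426 — 6 statements merged into one kernel-verified Lean document; each statement's English description precedes it below -/
import Mathlib

section
/- Let M be a set, Y a q-algebra of subsets of M, and π a density on Y having the Darboux property on Y. Then there exists a system of sets U(j, 2ⁿ) ∈ Y, for j = 0, …, 2ⁿ − 1 and n = 1, 2, …, such that for each n the sets U(0, 2ⁿ), …, U(2ⁿ − 1, 2ⁿ) are pairwise disjoint with union M, π(U(j, 2ⁿ)) = 2⁻ⁿ for every j, and U(j, 2ⁿ) = U(2j, 2ⁿ⁺¹) ∪ U(2j + 1, 2ⁿ⁺¹) for all n and all j = 0, …, 2ⁿ − 1. -/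
/-- A family `Y` of subsets of a set `M` (here: the type `α`) is a *q-algebra* if it contains
the whole set, is closed under disjoint unions and under relative complements. -/
def IsQAlgebra {α : Type*} (Y : Set (Set α)) : Prop :=
  Set.univ ∈ Y ∧
  (∀ A B : Set α, A ∈ Y → B ∈ Y → A ∩ B = ∅ → A ∪ B ∈ Y) ∧
  (∀ A B : Set α, A ∈ Y → B ∈ Y → A ⊆ B → B \ A ∈ Y)

/-- A *density* on `Y` is a finitely additive probability measure `π` such that a set `A`
belongs to `Y` iff it can be approximated from inside and outside by members of `Y`. -/
def IsDensity {α : Type*} (Y : Set (Set α)) (π : Set α → ℝ) : Prop :=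
  (∀ A ∈ Y, 0 ≤ π A ∧ π A ≤ 1) ∧
  π Set.univ = 1 ∧
  (∀ A B : Set α, A ∈ Y → B ∈ Y → A ∩ B = ∅ → π (A ∪ B) = π A + π B) ∧
  (∀ A : Set α, A ∈ Y ↔
    ∀ ε : ℝ, 0 < ε → ∃ A₁ ∈ Y, ∃ A₂ ∈ Y, A₁ ⊆ A ∧ A ⊆ A₂ ∧ π A₂ - π A₁ < ε)

/-- `π` has the *Darboux property* on `Y`. -/
def HasDarboux {α : Type*} (Y : Set (Set α)) (π : Set α → ℝ) : Prop :=
  ∀ A ∈ Y, ∀ c : ℝ, 0 ≤ c → c ≤ π A → ∃ B ∈ Y, B ⊆ A ∧ π B = c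

/-- Auxiliary: iterated dyadic splitting driven by a "halving" function. -/
def dyadicU {α : Type*} (half : Set α → Set α) : ℕ → ℕ → Set α
  | 0, _ => Set.univ
  | n + 1, j =>
      if j % 2 = 0 then half (dyadicU half n (j / 2))
      else dyadicU half n (j / 2) \ half (dyadicU half n (j / 2))

lemma dyadicU_succ {α : Type*} (half : Set α → Set α) (n j : ℕ) :
    dyadicU half (n + 1) j =
      if j % 2 = 0 then half (dyadicU half n (j / 2))
      else dyadicU half n (j / 2) \ half (dyadicU half n (j / 2)) := rfl

lemma dyadicU_zero {α : Type*} (half : Set α → Set α) (j : ℕ) :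
    dyadicU half 0 j = Set.univ := rfl

theorem exists_dyadic_decompositions {α : Type*} (Y : Set (Set α)) (π : Set α → ℝ)
    (hY : IsQAlgebra Y) (hπ : IsDensity Y π) (hD : HasDarboux Y π) :
    ∃ U : ℕ → ℕ → Set α,
      ∀ n : ℕ, 1 ≤ n →
        (∀ j < 2 ^ n, U n j ∈ Y) ∧
        (∀ j < 2 ^ n, ∀ i < 2 ^ n, j ≠ i → U n j ∩ U n i = ∅) ∧
        (⋃ j < 2 ^ n, U n j) = Set.univ ∧
        (∀ j < 2 ^ n, π (U n j) = (1 / 2 : ℝ) ^ n) ∧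
        (∀ j < 2 ^ n, U n j = U (n + 1) (2 * j) ∪ U (n + 1) (2 * j + 1)) := by
  obtain ⟨hpos, huniv, hadd, _⟩ := hπ
  obtain ⟨hYuniv, _, hYdiff⟩ := hY
  have key : ∀ A : Set α, ∃ B : Set α, A ∈ Y → B ∈ Y ∧ B ⊆ A ∧ π B = π A / 2 := by
    intro A
    by_cases hA : A ∈ Y
    · obtain ⟨B, hB, hBA, hBπ⟩ := hD A hA (π A / 2)
        (by linarith [(hpos A hA).1]) (by linarith [(hpos A hA).1])
      exact ⟨B, fun _ => ⟨hB, hBA, hBπ⟩⟩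
    · exact ⟨∅, fun h => absurd h hA⟩
  choose half hhalf using key
  set U : ℕ → ℕ → Set α := dyadicU half with hU
  have hUsucc : ∀ n j, U (n + 1) j =
      if j % 2 = 0 then half (U n (j / 2)) else U n (j / 2) \ half (U n (j / 2)) :=
    fun n j => dyadicU_succ half n j
  have hpow : ∀ n : ℕ, (2 : ℕ) ^ (n + 1) = 2 * 2 ^ n := fun n => by ring
  -- derived facts about the halving of a set in Y
  have hsplit : ∀ A ∈ Y, half A ∈ Y ∧ (A \ half A) ∈ Y ∧ π (half A) = π A / 2 ∧
      π (A \ half A) = π A / 2 := by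
    intro A hA
    obtain ⟨hB, hBA, hBπ⟩ := hhalf A hA
    have hdiff : A \ half A ∈ Y := hYdiff _ _ hB hA hBA
    have hdisj : half A ∩ (A \ half A) = ∅ := by
      ext x; simp (config := {contextual := true}) [Set.mem_diff]
    have hun : half A ∪ (A \ half A) = A := Set.union_diff_cancel hBA
    have := hadd _ _ hB hdiff hdisj
    rw [hun] at this
    refine ⟨hB, hdiff, hBπ, by linarith⟩
  have hd0 : ∀ A : Set α, half A ∩ (A \ half A) = ∅ := by
    intro A; ext x; simp (config := {contextual := true}) [Set.mem_diff]
  -- main invariant, for all n ≥ 0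
  have main : ∀ n : ℕ,
      (∀ j < 2 ^ n, U n j ∈ Y ∧ π (U n j) = (1 / 2 : ℝ) ^ n) ∧
      (∀ j < 2 ^ n, ∀ i < 2 ^ n, j ≠ i → U n j ∩ U n i = ∅) ∧
      (⋃ j < 2 ^ n, U n j) = Set.univ := by
    intro n
    induction n with
    | zero =>
      refine ⟨?_, ?_, ?_⟩
      · intro j hj
        interval_cases j
        refine ⟨hYuniv, ?_⟩
        rw [hU, dyadicU_zero, huniv]; norm_num
      · intro j hj i hi hne; omega
      · apply Set.eq_univ_of_univ_subset
        intro x _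
        simp only [Set.mem_iUnion]
        exact ⟨0, by norm_num, by rw [hU, dyadicU_zero]; trivial⟩
    | succ n ih =>
      obtain ⟨ih1, ih2, ih3⟩ := ih
      have hsub : ∀ j < 2 ^ (n + 1), U (n + 1) j ⊆ U n (j / 2) := by
        intro j hj
        rw [hUsucc]
        split
        · exact (hhalf _ (ih1 (j / 2) (by have := hpow n; omega)).1).2.1
        · exact Set.diff_subset
      have hmem : ∀ j < 2 ^ (n + 1), U (n + 1) j ∈ Y ∧
          π (U (n + 1) j) = (1 / 2 : ℝ) ^ (n + 1) := by
        intro j hj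
        have hj2 : j / 2 < 2 ^ n := by have := hpow n; omega
        obtain ⟨hAY, hAπ⟩ := ih1 (j / 2) hj2
        obtain ⟨h1, h2, h3, h4⟩ := hsplit _ hAY
        rw [hUsucc]
        split
        · exact ⟨h1, by rw [h3, hAπ]; ring⟩
        · exact ⟨h2, by rw [h4, hAπ]; ring⟩
      refine ⟨hmem, ?_, ?_⟩
      · intro j hj i hi hne
        by_cases hq : j / 2 = i / 2
        · have hpar : j % 2 ≠ i % 2 := by omega
          rw [hUsucc, hUsucc, hq]
          rcases Nat.even_or_odd j with hje | hjo
          · have hj0 : j % 2 = 0 := Nat.even_iff.mp hje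
            have hi1 : ¬ i % 2 = 0 := by omega
            rw [if_pos hj0, if_neg hi1]
            exact hd0 _
          · have hj0 : ¬ j % 2 = 0 := by have := Nat.odd_iff.mp hjo; omega
            have hi1 : i % 2 = 0 := by have := Nat.odd_iff.mp hjo; omega
            rw [if_neg hj0, if_pos hi1, Set.inter_comm]
            exact hd0 _
        · have hj2 : j / 2 < 2 ^ n := by have := hpow n; omega
          have hi2 : i / 2 < 2 ^ n := by have := hpow n; omega
          have hdsj := ih2 (j / 2) hj2 (i / 2) hi2 hq
          apply Set.eq_empty_of_subset_empty
          calc U (n + 1) j ∩ U (n + 1) i ⊆ U n (j / 2) ∩ U n (i / 2) :=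
                Set.inter_subset_inter (hsub j hj) (hsub i hi)
            _ = ∅ := hdsj
      · apply Set.eq_univ_of_univ_subset
        rw [← ih3]
        intro x hx
        simp only [Set.mem_iUnion] at hx ⊢
        obtain ⟨j, hj, hxj⟩ := hx
        have hAY := (ih1 j hj).1
        have hcup : U (n + 1) (2 * j) ∪ U (n + 1) (2 * j + 1) = U n j := by
          rw [hUsucc, hUsucc]
          have e1 : (2 * j) % 2 = 0 := by omega
          have e2 : ¬ (2 * j + 1) % 2 = 0 := by omega
          have e3 : 2 * j / 2 = j := by omega
          have e4 : (2 * j + 1) / 2 = j := by omega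
          rw [if_pos e1, if_neg e2, e3, e4]
          exact Set.union_diff_cancel (hhalf _ hAY).2.1
        rw [← hcup] at hxj
        rcases hxj with h | h
        · exact ⟨2 * j, by have := hpow n; omega, h⟩
        · exact ⟨2 * j + 1, by have := hpow n; omega, h⟩
  refine ⟨U, fun n _ => ?_⟩
  obtain ⟨h1, h2, h3⟩ := main n
  refine ⟨fun j hj => (h1 j hj).1, h2, h3, fun j hj => (h1 j hj).2, ?_⟩
  intro j hj
  have hAY := (h1 j hj).1
  rw [hUsucc, hUsucc]
  have e1 : (2 * j) % 2 = 0 := by omega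
  have e2 : ¬ (2 * j + 1) % 2 = 0 := by omega
  have e3 : 2 * j / 2 = j := by omega
  have e4 : (2 * j + 1) / 2 = j := by omega
  rw [if_pos e1, if_neg e2, e3, e4]
  exact (Set.union_diff_cancel (hhalf _ hAY).2.1).symm
end

section
/- Let (Ω, ρ) be a compact metric space with a Borel probability measure P, and let M be a dense subset of Ω. Define π*(S) = P(cl(S)) for S ⊆ M, where cl denotes closure in Ω. Then: (a) π* is a strong submeasure on the subsets of M, i.e. π*(∅) = 0, π* is monotone, and π*(A ∪ B) + π*(A ∩ B) ≤ π*(A) + π*(B) for all A, B ⊆ M; (b) the system Y = {A ⊆ M : π*(A) + π*(M \ A) = 1} is an algebra of subsets of M; (c) the restriction π = π*|_Y is a finitely additive probability measure on Y; and (d) a set A ⊆ M belongs to Y if and only if for every ε > 0 there exist A₁, A₂ ∈ Y with A₁ ⊆ A ⊆ A₂ and π(A₂) − π(A₁) < ε. -/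
open MeasureTheory

theorem piStar_strong_submeasure_algebra {Ω : Type*} [MetricSpace Ω] [CompactSpace Ω]
    [MeasurableSpace Ω] [BorelSpace Ω] (P : Measure Ω) [IsProbabilityMeasure P]
    (M : Set Ω) (hM : Dense M)
    (πs : Set Ω → ℝ) (hπs : ∀ S : Set Ω, πs S = (P (closure S)).toReal)
    (Y : Set (Set Ω)) (hY : Y = {A : Set Ω | A ⊆ M ∧ πs A + πs (M \ A) = 1}) :
    -- (a) π* is a strong submeasure on the subsets of M
    (πs ∅ = 0) ∧
    (∀ A B : Set Ω, A ⊆ B → B ⊆ M → πs A ≤ πs B) ∧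
    (∀ A B : Set Ω, A ⊆ M → B ⊆ M → πs (A ∪ B) + πs (A ∩ B) ≤ πs A + πs B) ∧
    -- (b) Y is an algebra of subsets of M
    (M ∈ Y) ∧
    (∀ A ∈ Y, ∀ B ∈ Y, A ∪ B ∈ Y) ∧
    (∀ A ∈ Y, ∀ B ∈ Y, A ∩ B ∈ Y) ∧
    (∀ A ∈ Y, M \ A ∈ Y) ∧
    -- (c) the restriction of π* to Y is a finitely additive probability measure
    (πs M = 1) ∧
    (∀ A ∈ Y, 0 ≤ πs A ∧ πs A ≤ 1) ∧
    (∀ A ∈ Y, ∀ B ∈ Y, A ∩ B = ∅ → πs (A ∪ B) = πs A + πs B) ∧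
    -- (d) membership in Y is equivalent to approximability from inside and outside
    (∀ A : Set Ω, A ⊆ M →
      (A ∈ Y ↔ ∀ ε : ℝ, 0 < ε →
        ∃ A₁ ∈ Y, ∃ A₂ ∈ Y, A₁ ⊆ A ∧ A ⊆ A₂ ∧ πs A₂ - πs A₁ < ε)) := by
  have hfin : ∀ S : Set Ω, P (closure S) ≠ ⊤ := fun S => measure_ne_top P _
  have hmono : ∀ A B : Set Ω, A ⊆ B → πs A ≤ πs B := by
    intro A B h
    rw [hπs, hπs]
    exact ENNReal.toReal_mono (hfin B) (measure_mono (closure_mono h))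
  have hempty : πs ∅ = 0 := by rw [hπs]; simp
  have hMuniv : closure M = Set.univ := hM.closure_eq
  have hπsM : πs M = 1 := by rw [hπs, hMuniv]; simp
  have hπsuniv : πs Set.univ = 1 := by rw [hπs, closure_univ]; simp
  have hnonneg : ∀ S, 0 ≤ πs S := fun S => by rw [hπs]; exact ENNReal.toReal_nonneg
  have hle1 : ∀ S, πs S ≤ 1 := fun S => hπsuniv ▸ hmono S Set.univ (Set.subset_univ S)
  -- strong submodularity
  have hsub : ∀ A B : Set Ω, πs (A ∪ B) + πs (A ∩ B) ≤ πs A + πs B := by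
    intro A B
    simp only [hπs]
    have h1 : P (closure (A ∪ B)) + P (closure (A ∩ B)) ≤ P (closure A) + P (closure B) := by
      rw [closure_union]
      calc P (closure A ∪ closure B) + P (closure (A ∩ B))
          ≤ P (closure A ∪ closure B) + P (closure A ∩ closure B) := by
            gcongr
            exact closure_inter_subset_inter_closure A B
        _ = P (closure A) + P (closure B) :=
            measure_union_add_inter (μ := P) (closure A) isClosed_closure.measurableSet
    have h2 := ENNReal.toReal_mono
      (by exact ENNReal.add_ne_top.mpr ⟨hfin A, hfin B⟩) h1
    rwa [ENNReal.toReal_add (hfin _) (hfin _), ENNReal.toReal_add (hfin _) (hfin _)] at h2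
  -- key identity
  have hkey : ∀ A : Set Ω, A ⊆ M →
      πs A + πs (M \ A) = 1 + (P (closure A ∩ closure (M \ A))).toReal := by
    intro A hA
    simp only [hπs]
    have hu : closure A ∪ closure (M \ A) = Set.univ := by
      rw [← closure_union, Set.union_diff_cancel hA, hMuniv]
    have h := measure_union_add_inter (μ := P) (closure A)
      (isClosed_closure (s := M \ A)).measurableSet
    rw [hu, measure_univ] at h
    rw [← ENNReal.toReal_add (hfin A) (hfin (M \ A)), ← h,
      ENNReal.toReal_add (by simp) (measure_ne_top P _), ENNReal.toReal_one]
  have hmem : ∀ A : Set Ω, A ∈ Y ↔ A ⊆ M ∧ P (closure A ∩ closure (M \ A)) = 0 := by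
    intro A
    rw [hY]
    simp only [Set.mem_setOf_eq]
    constructor
    · rintro ⟨hA, hsum⟩
      refine ⟨hA, ?_⟩
      rw [hkey A hA] at hsum
      have h0 : (P (closure A ∩ closure (M \ A))).toReal = 0 := by linarith
      exact ((ENNReal.toReal_eq_zero_iff _).mp h0).resolve_right (measure_ne_top P _)
    · rintro ⟨hA, h0⟩
      exact ⟨hA, by rw [hkey A hA, h0]; simp⟩
  -- complement
  have hcompl : ∀ A ∈ Y, M \ A ∈ Y := by
    intro A hAY
    obtain ⟨hA, h0⟩ := (hmem A).mp hAY
    refine (hmem (M \ A)).mpr ⟨Set.diff_subset, ?_⟩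
    rw [Set.diff_diff_cancel_left hA, Set.inter_comm]
    exact h0
  -- union
  have hunion : ∀ A ∈ Y, ∀ B ∈ Y, A ∪ B ∈ Y := by
    intro A hAY B hBY
    obtain ⟨hA, h0A⟩ := (hmem A).mp hAY
    obtain ⟨hB, h0B⟩ := (hmem B).mp hBY
    refine (hmem (A ∪ B)).mpr ⟨Set.union_subset hA hB, ?_⟩
    refine measure_mono_null ?_ (measure_union_null h0A h0B)
    intro x hx
    rw [closure_union] at hx
    obtain ⟨hx1, hx2⟩ := hx
    have hxa : x ∈ closure (M \ A) :=
      closure_mono (Set.diff_subset_diff_right Set.subset_union_left) hx2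
    have hxb : x ∈ closure (M \ B) :=
      closure_mono (Set.diff_subset_diff_right Set.subset_union_right) hx2
    rcases hx1 with h | h
    · exact Or.inl ⟨h, hxa⟩
    · exact Or.inr ⟨h, hxb⟩
  -- intersection
  have hinter : ∀ A ∈ Y, ∀ B ∈ Y, A ∩ B ∈ Y := by
    intro A hAY B hBY
    have hA : A ⊆ M := ((hmem A).mp hAY).1
    have hB : B ⊆ M := ((hmem B).mp hBY).1
    have : A ∩ B = M \ ((M \ A) ∪ (M \ B)) := by
      ext x
      simp only [Set.mem_inter_iff, Set.mem_diff, Set.mem_union, not_or, not_and, not_not]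
      constructor
      · intro ⟨hxA, hxB⟩
        exact ⟨hA hxA, fun _ => hxA, fun _ => hxB⟩
      · intro ⟨hxM, h1, h2⟩
        exact ⟨h1 hxM, h2 hxM⟩
    rw [this]
    exact hcompl _ (hunion _ (hcompl A hAY) _ (hcompl B hBY))
  -- M ∈ Y
  have hMY : M ∈ Y := by
    rw [hY]
    simp only [Set.mem_setOf_eq]
    refine ⟨le_refl M, ?_⟩
    rw [Set.diff_self, hempty, hπsM, add_zero]
  -- additivity
  have hadd : ∀ A ∈ Y, ∀ B ∈ Y, A ∩ B = ∅ → πs (A ∪ B) = πs A + πs B := by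
    intro A hAY B hBY hdisj
    obtain ⟨hA, h0A⟩ := (hmem A).mp hAY
    have hB : B ⊆ M := ((hmem B).mp hBY).1
    have hBMA : B ⊆ M \ A := fun x hx =>
      ⟨hB hx, fun hxA => Set.eq_empty_iff_forall_notMem.mp hdisj x ⟨hxA, hx⟩⟩
    have h0 : P (closure A ∩ closure B) = 0 :=
      measure_mono_null (Set.inter_subset_inter_right _ (closure_mono hBMA)) h0A
    have h := measure_union_add_inter (μ := P) (closure A)
      (isClosed_closure (s := B)).measurableSet
    rw [h0, add_zero] at h
    simp only [hπs]
    rw [closure_union, h, ENNReal.toReal_add (hfin A) (hfin B)]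
  refine ⟨hempty, fun A B h _ => hmono A B h, fun A B _ _ => hsub A B, hMY, hunion, hinter,
    hcompl, hπsM, fun A hAY => ⟨hnonneg A, hle1 A⟩, hadd, ?_⟩
  -- (d)
  intro A hA
  constructor
  · intro hAY ε hε
    exact ⟨A, hAY, A, hAY, le_refl A, le_refl A, by linarith⟩
  · intro h
    rw [hY]
    refine ⟨hA, ?_⟩
    have hge : 1 ≤ πs A + πs (M \ A) := by
      rw [hkey A hA]
      have := ENNReal.toReal_nonneg (a := P (closure A ∩ closure (M \ A)))
      linarith
    have hle : πs A + πs (M \ A) ≤ 1 := by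
      by_contra hlt
      push_neg at hlt
      obtain ⟨A₁, hA₁Y, A₂, hA₂Y, h1, h2, hεlt⟩ := h (πs A + πs (M \ A) - 1) (by linarith)
      have hA₁M : A₁ ⊆ M := by rw [hY] at hA₁Y; exact hA₁Y.1
      have hA₁sum : πs A₁ + πs (M \ A₁) = 1 := by rw [hY] at hA₁Y; exact hA₁Y.2
      have e1 : πs A ≤ πs A₂ := hmono A A₂ h2
      have e2 : πs (M \ A) ≤ πs (M \ A₁) := hmono _ _ (Set.diff_subset_diff_right h1)
      linarith
    linarith
end

section
/- Let (Ω, ρ) be a compact metric space with a Borel probability measure P, and let M be a dense subset of Ω. Then there exists a sequence {xₙ} with xₙ ∈ M for all n that is uniformly distributed in Ω. -/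
/-!
An independent sample from `P` is almost surely uniformly distributed: the strong law of large
numbers gives convergence of its averages for each function of a countable dense subset of
`C(Ω, ℝ)`, and the averages are 1-Lipschitz in the test function. Moving the `n`-th sample point
into `M` within distance `1 / (n + 1)` changes the values of a (uniformly continuous) test function
by a null sequence, which does not affect Cesàro limits.
-/

open MeasureTheory Filter Topology

/-- The upper Riemann integral of a bounded function `f` defined on a dense subset `M` of a
compact metric space `Ω` carrying a Borel probability measure `P`:
`∫* f = inf {∫ g dP : g continuous on Ω, g ≥ f on M}`. -/
noncomputable def upperInt {Ω : Type*} [MetricSpace Ω] [MeasurableSpace Ω]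
    (P : Measure Ω) (M : Set Ω) (f : M → ℝ) : ℝ :=
  sInf {r : ℝ | ∃ g : C(Ω, ℝ), (∀ x : M, f x ≤ g x) ∧ r = ∫ x, g x ∂P}

/-- The lower Riemann integral:
`∫_* f = sup {∫ g dP : g continuous on Ω, g ≤ f on M}`. -/
noncomputable def lowerInt {Ω : Type*} [MetricSpace Ω] [MeasurableSpace Ω]
    (P : Measure Ω) (M : Set Ω) (f : M → ℝ) : ℝ :=
  sSup {r : ℝ | ∃ g : C(Ω, ℝ), (∀ x : M, g x ≤ f x) ∧ r = ∫ x, g x ∂P}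

/-- A sequence `a : ℕ → Ω` is uniformly distributed in `Ω` with respect to the Borel
probability measure `P` if the averages of `g` along the sequence converge to `∫ g dP`
for every continuous real-valued `g` on `Ω`. -/
def UniformlyDistributed {Ω : Type*} [MetricSpace Ω] [MeasurableSpace Ω]
    (P : Measure Ω) (a : ℕ → Ω) : Prop :=
  ∀ g : C(Ω, ℝ),
    Tendsto (fun N : ℕ => (∑ n ∈ Finset.range N, g (a n)) / N) atTop (𝓝 (∫ x, g x ∂P))

open Finset ProbabilityTheory

section Sample

variable {Ω : Type*} [MeasurableSpace Ω] (P : Measure Ω) [IsProbabilityMeasure P]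

theorem ae_tendsto_average_infinitePi {g : Ω → ℝ} (hgm : Measurable g) (hg : Integrable g P) :
    ∀ᵐ ω ∂(Measure.infinitePi fun _ : ℕ => P),
      Tendsto (fun N : ℕ => (∑ n ∈ range N, g (ω n)) / N) atTop (𝓝 (∫ x, g x ∂P)) := by
  have heval : ∀ i, MeasurePreserving (Function.eval i) (Measure.infinitePi fun _ : ℕ => P) P :=
    measurePreserving_eval_infinitePi _
  have hident : ∀ i, IdentDistrib (fun ω : ℕ → Ω => g (ω i)) (fun ω : ℕ → Ω => g (ω 0)) _ _ :=
    fun i => (IdentDistrib.mk (heval i).aemeasurable (heval 0).aemeasurable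
        ((heval i).map_eq.trans (heval 0).map_eq.symm)).comp hgm
  have hint : ∫ ω : ℕ → Ω, g (ω 0) ∂(Measure.infinitePi fun _ : ℕ => P) = ∫ x, g x ∂P := by
    rw [← integral_map (heval 0).aemeasurable hgm.aestronglyMeasurable, (heval 0).map_eq]
  have hslln := strong_law_ae (fun i (ω : ℕ → Ω) => g (ω i))
    ((heval 0).integrable_comp_of_integrable hg)
    (fun i j hij => (iIndepFun_infinitePi (X := fun _ => g) fun _ => hgm).indepFun hij) hident
  filter_upwards [hslln] with ω hω
  simpa [hint, smul_eq_mul, inv_mul_eq_div] using hω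

end Sample

section Compact

variable {Ω : Type*} [TopologicalSpace Ω] [CompactSpace Ω]

theorem lipschitzWith_one_average (y : ℕ → Ω) (N : ℕ) :
    LipschitzWith 1 fun g : C(Ω, ℝ) => (∑ n ∈ range N, g (y n)) / N := by
  refine LipschitzWith.of_dist_le_mul fun g h => ?_
  rw [NNReal.coe_one, one_mul, Real.dist_eq, ← sub_div, abs_div, Nat.abs_cast, ← Real.dist_eq]
  rcases N.eq_zero_or_pos with rfl | hN
  · simp
  rw [div_le_iff₀ (by positivity)]
  calc dist (∑ n ∈ range N, g (y n)) (∑ n ∈ range N, h (y n))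
      ≤ ∑ n ∈ range N, dist (g (y n)) (h (y n)) := dist_sum_sum_le _ _ _
    _ ≤ ∑ _n ∈ range N, dist g h := sum_le_sum fun n _ => g.dist_apply_le_dist (y n)
    _ = dist g h * N := by rw [sum_const, card_range, nsmul_eq_mul, mul_comm]

variable [MeasurableSpace Ω] [OpensMeasurableSpace Ω]

theorem ContinuousMap.integrable_of_compactSpace (P : Measure Ω) [IsFiniteMeasure P]
    (g : C(Ω, ℝ)) : Integrable g P :=
  g.continuous.integrable_of_hasCompactSupport (.of_compactSpace _)

theorem lipschitzWith_one_integral (P : Measure Ω) [IsProbabilityMeasure P] :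
    LipschitzWith 1 fun g : C(Ω, ℝ) => ∫ x, g x ∂P := by
  refine LipschitzWith.of_dist_le_mul fun g h => ?_
  rw [NNReal.coe_one, one_mul, dist_eq_norm,
    ← integral_sub (g.integrable_of_compactSpace P) (h.integrable_of_compactSpace P)]
  simpa [dist_eq_norm] using norm_integral_le_of_norm_le_const (μ := P)
    (ae_of_all _ fun x => (g - h).norm_coe_le_norm x)

end Compact

section UniformlyDistributed

variable {Ω : Type*} [MetricSpace Ω] [CompactSpace Ω] [MeasurableSpace Ω]

theorem uniformlyDistributed_of_dense [OpensMeasurableSpace Ω] (P : Measure Ω)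
    [IsProbabilityMeasure P] {y : ℕ → Ω} {S : Set C(Ω, ℝ)} (hS : Dense S)
    (hy : ∀ g ∈ S,
      Tendsto (fun N : ℕ => (∑ n ∈ range N, g (y n)) / N) atTop (𝓝 (∫ x, g x ∂P))) :
    UniformlyDistributed P y := by
  have hequi :=
    (LipschitzWith.uniformEquicontinuous _ 1 (lipschitzWith_one_average y)).equicontinuous
  have hclosed :=
    hequi.isClosed_setOfPred_tendsto (l := atTop) (lipschitzWith_one_integral P).continuous
  exact fun g => hclosed.closure_subset_iff.2 hy (hS g)

theorem UniformlyDistributed.of_tendsto_dist {P : Measure Ω} {x y : ℕ → Ω}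
    (hy : UniformlyDistributed P y) (hxy : Tendsto (fun n => dist (x n) (y n)) atTop (𝓝 0)) :
    UniformlyDistributed P x := by
  intro g
  have hdiff : Tendsto (fun n => g (x n) - g (y n)) atTop (𝓝 0) := by
    have hg : UniformContinuous g := CompactSpace.uniformContinuous_of_continuous g.continuous
    have hxy' : Tendsto (fun n => (x n, y n)) atTop (uniformity Ω) :=
      tendsto_uniformity_iff_dist_tendsto_zero.2 hxy
    have hgxy := tendsto_uniformity_iff_dist_tendsto_zero.1 (Tendsto.comp hg hxy')
    exact squeeze_zero_norm (fun n => (dist_eq_norm _ _).ge) hgxy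
  convert hdiff.cesaro.add (hy g) using 2 with N
  · rw [sum_sub_distrib]; ring
  · rw [zero_add]

theorem ae_uniformlyDistributed_infinitePi [BorelSpace Ω] (P : Measure Ω)
    [IsProbabilityMeasure P] :
    ∀ᵐ ω ∂(Measure.infinitePi fun _ : ℕ => P), UniformlyDistributed P ω := by
  obtain ⟨gs, hgs⟩ := TopologicalSpace.exists_dense_seq C(Ω, ℝ)
  have hdense := ae_all_iff.2 fun k => ae_tendsto_average_infinitePi P (gs k).continuous.measurable
    ((gs k).integrable_of_compactSpace P)
  filter_upwards [hdense] with ω hω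
  exact uniformlyDistributed_of_dense P hgs (by rintro _ ⟨k, rfl⟩; exact hω k)

end UniformlyDistributed

theorem exists_uniformlyDistributed_in_dense_subset {Ω : Type*} [MetricSpace Ω]
    [CompactSpace Ω] [MeasurableSpace Ω] [BorelSpace Ω]
    (P : Measure Ω) [IsProbabilityMeasure P] (M : Set Ω) (hM : Dense M) :
    ∃ x : ℕ → Ω, (∀ n, x n ∈ M) ∧ UniformlyDistributed P x := by
  obtain ⟨y, hy⟩ := (ae_uniformlyDistributed_infinitePi P).exists
  have hnear : ∀ n : ℕ, ∃ z ∈ M, dist (y n) z < 1 / (n + 1) := fun n =>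
    hM.exists_dist_lt (y n) Nat.one_div_pos_of_nat
  choose x hxM hxy using hnear
  refine ⟨x, hxM, hy.of_tendsto_dist ?_⟩
  exact squeeze_zero (fun n => dist_nonneg) (fun n => by rw [dist_comm]; exact (hxy n).le)
    tendsto_one_div_add_atTop_nhds_zero_nat
end

section
/- Let (Ω, ρ) be a compact metric space with a Borel probability measure P containing the set ℕ of non-negative integers as a dense subset, and for S ⊆ ℕ set π*(S) = P(cl(S)), Y = {A ⊆ ℕ : π*(A) + π*(ℕ \ A) = 1}, and π = π*|_Y. Let ω : Ω → [0,1] be a continuous function, and suppose that the sequence {n}_{n∈ℕ} (the identity sequence of non-negative integers) is uniformly distributed in Ω. Then the sequence {ω(n)}_{n∈ℕ} is π-uniformly measurable if and only if it is uniformly distributed modulo 1. -/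
/-!
Uniform distribution of `n ↦ ι n` says exactly that the empirical measures
`(1/N) ∑_{n<N} δ_{ι n}` converge weakly to `P`. By the portmanteau theorem the upper density of
any `S ⊆ ℕ` is then at most `P (cl ι(S))`, so whenever `π*(S) + π*(ℕ \ S) = 1` the density of `S`
exists and equals `π*(S)`; this gives one direction.

Conversely, if `x = ω ∘ ι` is uniformly distributed modulo 1, the open-set half of the
portmanteau theorem gives `P (ω⁻¹ J) ≤ |J|` for open, and hence for closed, intervals `J`. For
`S = x⁻¹(I)` we have `cl ι(S) ⊆ ω⁻¹(cl I)` and `cl ι(ℕ \ S) ⊆ ω⁻¹([0,1] \ int I)`, so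
`π*(S) + π*(ℕ \ S) ≤ 1`; the reverse inequality holds because `ι` has dense range, and both
bounds are therefore equalities.
-/

open MeasureTheory Filter Topology

open scoped Classical

/-- A mapping `x : M → [0,1]` is `π`-uniformly measurable if for each subinterval
`I ⊆ [0,1]` the preimage `x⁻¹(I)` belongs to `Y` and `π (x⁻¹(I)) = |I|`. -/
def UnifMeasurable {α : Type*} (Y : Set (Set α)) (π : Set α → ℝ) (x : α → ℝ) : Prop :=
  ∀ a b : ℝ, 0 ≤ a → a ≤ b → b ≤ 1 →
    ∀ I : Set ℝ, (I = Set.Icc a b ∨ I = Set.Ico a b ∨ I = Set.Ioc a b ∨ I = Set.Ioo a b) →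
      x ⁻¹' I ∈ Y ∧ π (x ⁻¹' I) = b - a

/-- A sequence `x : ℕ → [0,1]` is uniformly distributed modulo 1 if for every subinterval
`I ⊆ [0,1]` the set `{n : xₙ ∈ I}` has asymptotic density equal to `|I|`. -/
def UDMod1 (x : ℕ → ℝ) : Prop :=
  ∀ a b : ℝ, 0 ≤ a → a ≤ b → b ≤ 1 →
    ∀ I : Set ℝ, (I = Set.Icc a b ∨ I = Set.Ico a b ∨ I = Set.Ioc a b ∨ I = Set.Ioo a b) →
      Tendsto (fun N : ℕ => (∑ n ∈ Finset.range N, if x n ∈ I then (1 : ℝ) else 0) / N)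
        atTop (𝓝 (b - a))

open scoped NNReal BoundedContinuousFunction

noncomputable def partialDensity (S : Set ℕ) (N : ℕ) : ℝ :=
  (∑ n ∈ Finset.range N, if n ∈ S then (1 : ℝ) else 0) / N

lemma partialDensity_mono {S T : Set ℕ} (h : S ⊆ T) (N : ℕ) :
    partialDensity S N ≤ partialDensity T N := by
  refine div_le_div_of_nonneg_right (Finset.sum_le_sum fun n _ => ?_) N.cast_nonneg
  by_cases hn : n ∈ S
  · simp [hn, h hn]
  · simp only [hn, if_false]
    split_ifs <;> norm_num

lemma partialDensity_add_compl (S : Set ℕ) {N : ℕ} (hN : 0 < N) :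
    partialDensity S N + partialDensity Sᶜ N = 1 := by
  rw [partialDensity, partialDensity, ← add_div, ← Finset.sum_add_distrib,
    div_eq_one_iff_eq (by positivity)]
  simp [apply_ite₂ (· + ·)]

lemma tendsto_partialDensity_compl {S : Set ℕ} {L : ℝ}
    (h : Tendsto (partialDensity S) atTop (𝓝 L)) :
    Tendsto (partialDensity Sᶜ) atTop (𝓝 (1 - L)) :=
  (tendsto_const_nhds.sub h).congr' <| (eventually_gt_atTop 0).mono fun N hN => by
    linarith [partialDensity_add_compl S hN]

lemma Ioo_subset_and_subset_Icc {I : Set ℝ} {a b : ℝ}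
    (hI : I = Set.Icc a b ∨ I = Set.Ico a b ∨ I = Set.Ioc a b ∨ I = Set.Ioo a b) :
    Set.Ioo a b ⊆ I ∧ I ⊆ Set.Icc a b := by
  rcases hI with rfl | rfl | rfl | rfl
  exacts [⟨Set.Ioo_subset_Icc_self, subset_rfl⟩,
    ⟨Set.Ioo_subset_Ico_self, Set.Ico_subset_Icc_self⟩,
    ⟨Set.Ioo_subset_Ioc_self, Set.Ioc_subset_Icc_self⟩, ⟨subset_rfl, Set.Ioo_subset_Icc_self⟩]

lemma mem_Icc_union_Icc_of_notMem {I : Set ℝ} {a b x : ℝ} (hI : Set.Ioo a b ⊆ I)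
    (hx : x ∈ Set.Icc (0 : ℝ) 1) (hxI : x ∉ I) : x ∈ Set.Icc 0 a ∪ Set.Icc b 1 := by
  by_contra h
  simp only [Set.mem_union, Set.mem_Icc, hx.1, hx.2, true_and, and_true, not_or, not_le] at h
  exact hxI (hI h)

lemma one_le_measureReal_closure_image_add {Ω : Type*} [TopologicalSpace Ω]
    [MeasurableSpace Ω] {P : Measure Ω} [IsProbabilityMeasure P] {a : ℕ → Ω}
    (ha : DenseRange a) (S : Set ℕ) :
    1 ≤ P.real (closure (a '' S)) + P.real (closure (a '' Sᶜ)) :=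
  calc 1 = P.real (closure (a '' S) ∪ closure (a '' Sᶜ)) := by
        rw [← closure_union, ← Set.image_union, Set.union_compl_self, Set.image_univ,
          ha.closure_eq, probReal_univ]
    _ ≤ _ := measureReal_union_le _ _

section Empirical

variable {Ω : Type*} [MeasurableSpace Ω]

-- For `N = 0` this is the zero measure (`(0 : ℝ≥0)⁻¹ = 0`).
noncomputable def empiricalMeasure (a : ℕ → Ω) (N : ℕ) : FiniteMeasure Ω :=
  ⟨(N : ℝ≥0)⁻¹ • ∑ n ∈ Finset.range N, Measure.dirac (a n), inferInstance⟩

lemma empiricalMeasure_real_apply (a : ℕ → Ω) (N : ℕ) {F : Set Ω} (hF : MeasurableSet F) :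
    (empiricalMeasure a N : Measure Ω).real F = partialDensity (a ⁻¹' F) N := by
  simp [empiricalMeasure, partialDensity, measureReal_def, Measure.dirac_apply' _ hF,
    Set.indicator, div_eq_inv_mul, ENNReal.toReal_smul, NNReal.smul_def]

lemma integral_empiricalMeasure [TopologicalSpace Ω] [OpensMeasurableSpace Ω] (a : ℕ → Ω)
    (N : ℕ) (g : Ω →ᵇ ℝ) :
    ∫ x, g x ∂(empiricalMeasure a N : Measure Ω) = (∑ n ∈ Finset.range N, g (a n)) / N := by
  rw [empiricalMeasure, FiniteMeasure.toMeasure_mk, integral_smul_nnreal_measure,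
    integral_finsetSum_measure fun n _ => g.integrable _]
  simp [integral_dirac' _ _ g.continuous.stronglyMeasurable, div_eq_inv_mul, NNReal.smul_def]

end Empirical

namespace UniformlyDistributed

variable {Ω : Type*} [MetricSpace Ω] [MeasurableSpace Ω] [OpensMeasurableSpace Ω]
  {P : Measure Ω} {a : ℕ → Ω}

lemma tendsto_empiricalMeasure [IsFiniteMeasure P] (h : UniformlyDistributed P a) :
    Tendsto (empiricalMeasure a) atTop (𝓝 ⟨P, inferInstance⟩) :=
  FiniteMeasure.tendsto_iff_forall_integral_tendsto.2 fun g => by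
    simp only [integral_empiricalMeasure]
    exact h g.toContinuousMap

lemma eventually_partialDensity_lt [IsFiniteMeasure P] (h : UniformlyDistributed P a)
    {F : Set Ω} (hF : IsClosed F) {S : Set ℕ} (hS : S ⊆ a ⁻¹' F) {c : ℝ}
    (hc : P.real F < c) : ∀ᶠ N in atTop, partialDensity S N < c := by
  have hlimsup :=
    FiniteMeasure.limsup_measure_closed_le_of_tendsto h.tendsto_empiricalMeasure hF
  have hc' : P F < ENNReal.ofReal c :=
    (ENNReal.lt_ofReal_iff_toReal_lt (measure_ne_top P F)).2 hc
  filter_upwards [eventually_lt_of_limsup_lt (hlimsup.trans_lt hc')] with N hN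
  calc partialDensity S N ≤ partialDensity (a ⁻¹' F) N := partialDensity_mono hS N
    _ = (empiricalMeasure a N : Measure Ω).real F :=
      (empiricalMeasure_real_apply a N hF.measurableSet).symm
    _ < c := ENNReal.toReal_lt_of_lt_ofReal hN

lemma measureReal_le_of_tendsto [IsProbabilityMeasure P] (h : UniformlyDistributed P a)
    {G : Set Ω} (hG : IsOpen G) {S : Set ℕ} (hS : a ⁻¹' G ⊆ S) {L : ℝ}
    (hL : Tendsto (partialDensity S) atTop (𝓝 L)) : P.real G ≤ L := by
  suffices 1 - L ≤ P.real Gᶜ by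
    rw [measureReal_compl hG.measurableSet, probReal_univ] at this
    linarith
  refine le_of_forall_gt_imp_ge_of_dense fun c hc => le_of_tendsto
    (tendsto_partialDensity_compl hL) ?_
  filter_upwards [h.eventually_partialDensity_lt hG.isClosed_compl
    (Set.compl_subset_compl.2 hS) hc] with N hN using hN.le

lemma tendsto_partialDensity [IsFiniteMeasure P] (h : UniformlyDistributed P a) (S : Set ℕ)
    (hS : P.real (closure (a '' S)) + P.real (closure (a '' Sᶜ)) = 1) :
    Tendsto (partialDensity S) atTop (𝓝 (P.real (closure (a '' S)))) := by
  have hsub (T : Set ℕ) : T ⊆ a ⁻¹' closure (a '' T) := fun n hn =>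
    subset_closure (Set.mem_image_of_mem a hn)
  refine tendsto_order.2 ⟨fun c hc => ?_, fun c hc =>
    h.eventually_partialDensity_lt isClosed_closure (hsub S) hc⟩
  filter_upwards [h.eventually_partialDensity_lt isClosed_closure (hsub Sᶜ)
    (show P.real (closure (a '' Sᶜ)) < 1 - c by linarith), eventually_gt_atTop 0]
    with N hN hN0
  linarith [partialDensity_add_compl S hN0]

lemma measureReal_preimage_Icc_le [IsProbabilityMeasure P] (h : UniformlyDistributed P a)
    {ω : Ω → ℝ} (hω : Continuous ω) (hx01 : ∀ n, ω (a n) ∈ Set.Icc (0 : ℝ) 1)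
    (hx : UDMod1 (fun n => ω (a n))) {s t : ℝ} (hs : 0 ≤ s) (hst : s ≤ t) (ht : t ≤ 1) :
    P.real (ω ⁻¹' Set.Icc s t) ≤ t - s := by
  refine le_of_forall_pos_le_add fun ε hε => ?_
  set s' := max (s - ε / 2) 0
  set t' := min (t + ε / 2) 1
  have hsub : a ⁻¹' (ω ⁻¹' Set.Ioo (s - ε / 2) (t + ε / 2))
      ⊆ (fun n => ω (a n)) ⁻¹' Set.Icc s' t' := fun n hn =>
    ⟨max_le hn.1.le (hx01 n).1, le_min hn.2.le (hx01 n).2⟩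
  have hs't' : s' ≤ t' :=
    (max_le (by linarith) hs).trans (hst.trans (le_min (by linarith) ht))
  calc P.real (ω ⁻¹' Set.Icc s t)
      ≤ P.real (ω ⁻¹' Set.Ioo (s - ε / 2) (t + ε / 2)) :=
        measureReal_mono (Set.preimage_mono (Set.Icc_subset_Ioo (by linarith) (by linarith)))
    _ ≤ t' - s' := h.measureReal_le_of_tendsto (isOpen_Ioo.preimage hω) hsub
        (hx s' t' (le_max_right _ _) hs't' (min_le_right _ _) _ (Or.inl rfl))
    _ ≤ t - s + ε := by linarith [min_le_left (t + ε / 2) 1, le_max_left (s - ε / 2) 0]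

end UniformlyDistributed

theorem unifMeasurable_iff_udMod1_general {Ω : Type*} [MetricSpace Ω]
    [MeasurableSpace Ω] [BorelSpace Ω] (P : Measure Ω) [IsProbabilityMeasure P]
    (ι : ℕ → Ω) (hdense : DenseRange ι)
    (πs : Set ℕ → ℝ) (hπs : ∀ S : Set ℕ, πs S = (P (closure (ι '' S))).toReal)
    (Y : Set (Set ℕ)) (hY : Y = {A : Set ℕ | πs A + πs (Set.univ \ A) = 1})
    (ω : Ω → ℝ) (hω : Continuous ω) (hω01 : ∀ t : Ω, ω t ∈ Set.Icc (0 : ℝ) 1)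
    (hUD : UniformlyDistributed P ι) :
    UnifMeasurable Y πs (fun n => ω (ι n)) ↔ UDMod1 (fun n => ω (ι n)) := by
  have hπ : ∀ S, πs S = P.real (closure (ι '' S)) := hπs
  have hπc : ∀ S, πs (Set.univ \ S) = P.real (closure (ι '' Sᶜ)) := fun S => by
    rw [hπ, ← Set.compl_eq_univ_sdiff]
  have hY' : ∀ S, S ∈ Y ↔ πs S + πs (Set.univ \ S) = 1 := fun S => by rw [hY]; rfl
  have hIcc_le := hUD.measureReal_preimage_Icc_le hω (fun n => hω01 (ι n))
  constructor
  · intro hUM a b ha hab hb I hI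
    obtain ⟨hSY, hval⟩ := hUM a b ha hab hb I hI
    rw [hY', hπ, hπc] at hSY
    rw [hπ] at hval
    exact hval ▸ hUD.tendsto_partialDensity _ hSY
  · intro hx a b ha hab hb I hI
    obtain ⟨hIooI, hIIcc⟩ := Ioo_subset_and_subset_Icc hI
    set S := (fun n => ω (ι n)) ⁻¹' I
    have hS : πs S ≤ b - a := by
      rw [hπ]
      calc P.real (closure (ι '' S)) ≤ P.real (ω ⁻¹' Set.Icc a b) := measureReal_mono <|
            closure_minimal (Set.image_subset_iff.2 (Set.preimage_mono hIIcc))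
              (isClosed_Icc.preimage hω)
        _ ≤ b - a := hIcc_le hx ha hab hb
    have hSc : πs (Set.univ \ S) ≤ a + (1 - b) := by
      rw [hπc]
      calc P.real (closure (ι '' Sᶜ)) ≤ P.real (ω ⁻¹' Set.Icc 0 a ∪ ω ⁻¹' Set.Icc b 1) :=
            measureReal_mono <| closure_minimal
              (Set.image_subset_iff.2 fun n hn => mem_Icc_union_Icc_of_notMem hIooI (hω01 _) hn)
              ((isClosed_Icc.preimage hω).union (isClosed_Icc.preimage hω))
        _ ≤ (a - 0) + (1 - b) := (measureReal_union_le _ _).trans <| add_le_add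
            (hIcc_le hx le_rfl ha (hab.trans hb)) (hIcc_le hx (ha.trans hab) hb le_rfl)
        _ = a + (1 - b) := by ring
    have hcover := one_le_measureReal_closure_image_add (P := P) hdense S
    rw [← hπ, ← hπc] at hcover
    exact ⟨(hY' S).2 (by linarith), by linarith⟩

theorem unifMeasurable_iff_udMod1 {Ω : Type*} [MetricSpace Ω] [CompactSpace Ω]
    [MeasurableSpace Ω] [BorelSpace Ω] (P : Measure Ω) [IsProbabilityMeasure P]
    (ι : ℕ → Ω) (hι : Function.Injective ι) (hdense : DenseRange ι)
    (πs : Set ℕ → ℝ) (hπs : ∀ S : Set ℕ, πs S = (P (closure (ι '' S))).toReal)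
    (Y : Set (Set ℕ)) (hY : Y = {A : Set ℕ | πs A + πs (Set.univ \ A) = 1})
    (ω : Ω → ℝ) (hω : Continuous ω) (hω01 : ∀ t : Ω, ω t ∈ Set.Icc (0 : ℝ) 1)
    (hUD : UniformlyDistributed P ι) :
    UnifMeasurable Y πs (fun n => ω (ι n)) ↔ UDMod1 (fun n => ω (ι n)) :=
  unifMeasurable_iff_udMod1_general P ι hdense πs hπs Y hY ω hω hω01 hUD
end

section
/- Let (Ω, ρ) be a compact metric space with a Borel probability measure P containing the set ℕ of non-negative integers as a dense subset, and for S ⊆ ℕ set π*(S) = P(cl(S)), Y = {A ⊆ ℕ : π*(A) + π*(ℕ \ A) = 1}, and π = π*|_Y. Let ω : Ω → [0,1] be a continuous function such that ∫_Ω f(ω(t)) dP(t) = ∫₀¹ f(t) dt for every continuous real-valued function f on [0,1]. If the sequence {n}_{n∈ℕ} (the identity sequence of non-negative integers) is uniformly distributed in Ω, then the sequence {ω(n)}_{n∈ℕ} is π-uniformly measurable. -/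
open MeasureTheory Filter Topology

open scoped Classical

/-!
The integral identity says that `ω` pushes `P` forward to Lebesgue measure on `[0,1]`, so
`P (ω⁻¹ J) = |J|` for every subinterval `J`. For `A = (ω ∘ ι)⁻¹(I)`, the closure of `ι(A)`
lies in `ω⁻¹(cl I)` and that of `ι(ℕ \ A)` in `ω⁻¹(ℝ \ int I)`, hence `π*(A) ≤ |I|` and
`π*(ℕ \ A) ≤ 1 - |I|`. Since `ℕ` is dense, the two closures cover `Ω`, so the sum is at
least `1`, which forces both bounds to be equalities.
-/

open Set BoundedContinuousFunction

theorem map_eq_volume_restrict_Icc_of_integral_comp_eq {Ω : Type*} [MeasurableSpace Ω]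
    [TopologicalSpace Ω] [OpensMeasurableSpace Ω] (μ : Measure Ω) [IsFiniteMeasure μ]
    {ω : Ω → ℝ} (hω : Continuous ω)
    (hint : ∀ f : ℝ →ᵇ ℝ, ∫ t, f (ω t) ∂μ = ∫ t in (0 : ℝ)..1, f t) :
    μ.map ω = volume.restrict (Icc 0 1) := by
  refine ext_of_forall_integral_eq_of_IsFiniteMeasure fun f => ?_
  rw [integral_map hω.aemeasurable f.continuous.aestronglyMeasurable, hint,
    intervalIntegral.integral_of_le zero_le_one, integral_Icc_eq_integral_Ioc]

theorem one_le_measureReal_closure_image_add_compl {α Ω : Type*} [TopologicalSpace Ω]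
    [MeasurableSpace Ω] (μ : Measure Ω) [IsProbabilityMeasure μ] {ι : α → Ω}
    (hι : DenseRange ι) (S : Set α) :
    1 ≤ μ.real (closure (ι '' S)) + μ.real (closure (ι '' Sᶜ)) :=
  calc 1 = μ.real (closure (ι '' S) ∪ closure (ι '' Sᶜ)) := by
        rw [← closure_union, ← image_union, union_compl_self, image_univ,
          hι.closure_range, probReal_univ]
    _ ≤ _ := measureReal_union_le _ _

theorem omega_image_unifMeasurable_general {Ω : Type*} [MetricSpace Ω]
    [MeasurableSpace Ω] [BorelSpace Ω] (P : Measure Ω) [IsProbabilityMeasure P]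
    (ι : ℕ → Ω) (hdense : DenseRange ι)
    (πs : Set ℕ → ℝ) (hπs : ∀ S : Set ℕ, πs S = (P (closure (ι '' S))).toReal)
    (Y : Set (Set ℕ)) (hY : Y = {A : Set ℕ | πs A + πs (Set.univ \ A) = 1})
    (ω : Ω → ℝ) (hω : Continuous ω)
    (hint : ∀ f : ℝ → ℝ, ContinuousOn f (Set.Icc (0 : ℝ) 1) →
      ∫ t, f (ω t) ∂P = ∫ t in (0 : ℝ)..1, f t) :
    UnifMeasurable Y πs (fun n => ω (ι n)) := by
  intro a b ha hab hb I hI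
  have hIoo : Ioo a b ⊆ I := by rcases hI with rfl | rfl | rfl | rfl <;> intro x hx <;> grind
  have hIcc : I ⊆ Icc a b := by rcases hI with rfl | rfl | rfl | rfl <;> intro x hx <;> grind
  have hmap := map_eq_volume_restrict_Icc_of_integral_comp_eq P hω
    fun f => hint f f.continuous.continuousOn
  have hP (s : Set ℝ) (hs : MeasurableSet s) :
      P.real (ω ⁻¹' s) = volume.real (s ∩ Icc 0 1) := by
    rw [measureReal_def, ← Measure.map_apply hω.measurable hs, hmap, Measure.restrict_apply hs,
      measureReal_def]
  set S := (fun n => ω (ι n)) ⁻¹' I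
  have hS : πs S ≤ b - a := by
    rw [hπs, ← measureReal_def]
    calc P.real (closure (ι '' S)) ≤ P.real (ω ⁻¹' Icc a b) :=
          measureReal_mono <| closure_minimal (image_subset_iff.2 fun _ hn => hIcc hn)
            (isClosed_Icc.preimage hω)
      _ = b - a := by
          rw [hP _ measurableSet_Icc, inter_eq_left.2 (Icc_subset_Icc ha hb),
            Real.volume_real_Icc_of_le hab]
  have hSc : πs (univ \ S) ≤ 1 - (b - a) := by
    rw [hπs, ← measureReal_def]
    calc P.real (closure (ι '' (univ \ S))) ≤ P.real (ω ⁻¹' (Ioo a b)ᶜ) :=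
          measureReal_mono <| closure_minimal (image_subset_iff.2 fun _ hn h => hn.2 (hIoo h))
            (isOpen_Ioo.isClosed_compl.preimage hω)
      _ = 1 - (b - a) := by
          rw [preimage_compl, probReal_compl_eq_one_sub (measurableSet_Ioo.preimage hω.measurable),
            hP _ measurableSet_Ioo,
            inter_eq_left.2 (Ioo_subset_Icc_self.trans (Icc_subset_Icc ha hb)),
            Real.volume_real_Ioo_of_le hab]
  have hsum : 1 ≤ πs S + πs (univ \ S) := by
    rw [hπs, hπs, ← compl_eq_univ_sdiff]
    exact one_le_measureReal_closure_image_add_compl P hdense S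
  exact ⟨hY ▸ show πs S + πs (univ \ S) = 1 by linarith, by linarith⟩

theorem omega_image_unifMeasurable {Ω : Type*} [MetricSpace Ω] [CompactSpace Ω]
    [MeasurableSpace Ω] [BorelSpace Ω] (P : Measure Ω) [IsProbabilityMeasure P]
    (ι : ℕ → Ω) (hι : Function.Injective ι) (hdense : DenseRange ι)
    (πs : Set ℕ → ℝ) (hπs : ∀ S : Set ℕ, πs S = (P (closure (ι '' S))).toReal)
    (Y : Set (Set ℕ)) (hY : Y = {A : Set ℕ | πs A + πs (Set.univ \ A) = 1})
    (ω : Ω → ℝ) (hω : Continuous ω) (hω01 : ∀ t : Ω, ω t ∈ Set.Icc (0 : ℝ) 1)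
    (hint : ∀ f : ℝ → ℝ, ContinuousOn f (Set.Icc (0 : ℝ) 1) →
      ∫ t, f (ω t) ∂P = ∫ t in (0 : ℝ)..1, f t)
    (hUD : UniformlyDistributed P ι) :
    UnifMeasurable Y πs (fun n => ω (ι n)) :=
  omega_image_unifMeasurable_general P ι hdense πs hπs Y hY ω hω hint
end

section
/- Let Y be a q-algebra of subsets of ℕ and let π be a density on Y having the Darboux property on Y. If y : ℕ → [0,1] is a π-uniformly measurable mapping and x : ℕ → [0,1] is a mapping such that lim_{n→∞} |y(n) − x(n)| = 0, then x is also a π-uniformly measurable mapping. -/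
open Filter Topology

/-!
Finite sets are null: a point `n` lies in `y⁻¹ [y n, y n]`, whose density is the length `0`
of a degenerate interval. If `|y n - x n| < δ` for `n ≥ N`, then `x⁻¹ I` lies between
`y⁻¹ [a + δ, b - δ] \ {n < N}` and `y⁻¹ [a - δ, b + δ] ∪ {n < N}`; removing or adding a null
set changes neither membership in `Y` nor the density, so these bounds have densities within
`2δ` of `b - a`, and the approximation axiom of a density gives `π (x⁻¹ I) = b - a`.
-/

open Set

def IsNullSet {α : Type*} (Y : Set (Set α)) (π : Set α → ℝ) (A : Set α) : Prop :=
  A ∈ Y ∧ π A = 0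

section Density

variable {α : Type*} {Y : Set (Set α)} {π : Set α → ℝ} {A B : Set α}

theorem IsQAlgebra.empty_mem (hY : IsQAlgebra Y) : (∅ : Set α) ∈ Y := by
  simpa using hY.2.2 univ univ hY.1 hY.1 subset_rfl

theorem IsQAlgebra.union_mem (hY : IsQAlgebra Y) (hA : A ∈ Y) (hB : B ∈ Y)
    (hAB : Disjoint A B) : A ∪ B ∈ Y :=
  hY.2.1 A B hA hB hAB.inter_eq

theorem IsQAlgebra.diff_mem (hY : IsQAlgebra Y) (hA : A ∈ Y) (hB : B ∈ Y) (hAB : A ⊆ B) :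
    B \ A ∈ Y :=
  hY.2.2 A B hA hB hAB

theorem IsDensity.nonneg (hπ : IsDensity Y π) (hA : A ∈ Y) : 0 ≤ π A :=
  (hπ.1 A hA).1

theorem IsDensity.union (hπ : IsDensity Y π) (hA : A ∈ Y) (hB : B ∈ Y)
    (hAB : Disjoint A B) : π (A ∪ B) = π A + π B :=
  hπ.2.2.1 A B hA hB hAB.inter_eq

theorem IsDensity.empty (hY : IsQAlgebra Y) (hπ : IsDensity Y π) : π ∅ = 0 := by
  have h := hπ.union hY.empty_mem hY.empty_mem (disjoint_empty ∅)
  rw [union_empty] at h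
  linarith

theorem IsDensity.diff (hY : IsQAlgebra Y) (hπ : IsDensity Y π) (hA : A ∈ Y) (hB : B ∈ Y)
    (hAB : A ⊆ B) : π (B \ A) = π B - π A := by
  have h := hπ.union hA (hY.diff_mem hA hB hAB) disjoint_sdiff_right
  rw [union_sdiff_cancel hAB] at h
  linarith

theorem IsDensity.mono (hY : IsQAlgebra Y) (hπ : IsDensity Y π) (hA : A ∈ Y) (hB : B ∈ Y)
    (hAB : A ⊆ B) : π A ≤ π B := by
  linarith [hπ.diff hY hA hB hAB, hπ.nonneg (hY.diff_mem hA hB hAB)]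

theorem IsDensity.mem_and_eq_of_approx (hY : IsQAlgebra Y) (hπ : IsDensity Y π) {c : ℝ}
    (h : ∀ ε > 0, ∃ A₁ ∈ Y, ∃ A₂ ∈ Y, A₁ ⊆ A ∧ A ⊆ A₂ ∧ c - ε ≤ π A₁ ∧ π A₂ ≤ c + ε) :
    A ∈ Y ∧ π A = c := by
  have hA : A ∈ Y := (hπ.2.2.2 A).2 fun ε hε => by
    obtain ⟨A₁, h₁, A₂, h₂, hA₁, hA₂, hc₁, hc₂⟩ := h (ε / 3) (by positivity)
    exact ⟨A₁, h₁, A₂, h₂, hA₁, hA₂, by linarith⟩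
  refine ⟨hA, le_antisymm (le_of_forall_pos_le_add fun ε hε => ?_)
    (le_of_forall_pos_le_add fun ε hε => ?_)⟩
  · obtain ⟨A₁, -, A₂, h₂, -, hA₂, -, hc₂⟩ := h ε hε
    linarith [hπ.mono hY hA h₂ hA₂]
  · obtain ⟨A₁, h₁, A₂, -, hA₁, -, hc₁, -⟩ := h ε hε
    linarith [hπ.mono hY h₁ hA hA₁]

theorem IsNullSet.subset (hY : IsQAlgebra Y) (hπ : IsDensity Y π) (hB : IsNullSet Y π B)
    (hAB : A ⊆ B) : IsNullSet Y π A := by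
  have hA : A ∈ Y := (hπ.2.2.2 A).2 fun ε hε =>
    ⟨∅, hY.empty_mem, B, hB.1, empty_subset A, hAB, by rw [hB.2, hπ.empty hY]; linarith⟩
  exact ⟨hA, le_antisymm (hB.2 ▸ hπ.mono hY hA hB.1 hAB) (hπ.nonneg hA)⟩

theorem IsDensity.union_isNullSet (hY : IsQAlgebra Y) (hπ : IsDensity Y π) (hA : A ∈ Y)
    (hB : IsNullSet Y π B) : A ∪ B ∈ Y ∧ π (A ∪ B) = π A := by
  have hBA : IsNullSet Y π (B \ A) := hB.subset hY hπ sdiff_subset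
  rw [← union_sdiff_self]
  exact ⟨hY.union_mem hA hBA.1 disjoint_sdiff_right,
    by rw [hπ.union hA hBA.1 disjoint_sdiff_right, hBA.2, add_zero]⟩

theorem IsDensity.diff_isNullSet (hY : IsQAlgebra Y) (hπ : IsDensity Y π) (hA : A ∈ Y)
    (hB : IsNullSet Y π B) : A \ B ∈ Y ∧ π (A \ B) = π A := by
  have hAB : IsNullSet Y π (A ∩ B) := hB.subset hY hπ inter_subset_right
  rw [← sdiff_self_inter]
  exact ⟨hY.diff_mem hAB.1 hA inter_subset_left,
    by rw [hπ.diff hY hAB.1 hA inter_subset_left, hAB.2, sub_zero]⟩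

theorem IsNullSet.union (hY : IsQAlgebra Y) (hπ : IsDensity Y π) (hA : IsNullSet Y π A)
    (hB : IsNullSet Y π B) : IsNullSet Y π (A ∪ B) := by
  obtain ⟨hmem, hval⟩ := hπ.union_isNullSet hY hA.1 hB
  exact ⟨hmem, hval.trans hA.2⟩

theorem isNullSet_of_finite (hY : IsQAlgebra Y) (hπ : IsDensity Y π)
    (hsingleton : ∀ a : α, IsNullSet Y π {a}) {F : Set α} (hF : F.Finite) :
    IsNullSet Y π F := by
  induction F, hF using Set.Finite.induction_on with
  | empty => exact ⟨hY.empty_mem, hπ.empty hY⟩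
  | insert _ _ ih => exact (hsingleton _).union hY hπ ih

end Density

section UniformlyMeasurable

variable {α : Type*} {Y : Set (Set α)} {π : Set α → ℝ} {y : α → ℝ}

theorem UnifMeasurable.preimage_Icc (hY : IsQAlgebra Y) (hπ : IsDensity Y π)
    (hy01 : ∀ n, y n ∈ Icc (0 : ℝ) 1) (hy : UnifMeasurable Y π y) (p q : ℝ) :
    y ⁻¹' Icc p q ∈ Y ∧ π (y ⁻¹' Icc p q) = max (min q 1 - max p 0) 0 := by
  have hclip : y ⁻¹' Icc p q = y ⁻¹' Icc (max p 0) (min q 1) := by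
    ext n
    simp only [mem_preimage, mem_Icc, max_le_iff, le_min_iff, (hy01 n).1, (hy01 n).2, and_true]
  rw [hclip]
  rcases le_or_gt (max p 0) (min q 1) with hpq | hpq
  · rw [max_eq_left (sub_nonneg.2 hpq)]
    exact hy _ _ (le_max_right p 0) hpq (min_le_right q 1) _ (Or.inl rfl)
  · rw [Icc_eq_empty hpq.not_ge, preimage_empty, max_eq_right (by linarith)]
    exact ⟨hY.empty_mem, hπ.empty hY⟩

theorem UnifMeasurable.isNullSet_singleton (hY : IsQAlgebra Y) (hπ : IsDensity Y π)
    (hy01 : ∀ n, y n ∈ Icc (0 : ℝ) 1) (hy : UnifMeasurable Y π y) (n : α) :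
    IsNullSet Y π {n} := by
  have hfibre : IsNullSet Y π (y ⁻¹' Icc (y n) (y n)) := by
    obtain ⟨hmem, hval⟩ := hy _ _ (hy01 n).1 le_rfl (hy01 n).2 _ (Or.inl rfl)
    exact ⟨hmem, hval.trans (sub_self _)⟩
  exact hfibre.subset hY hπ (singleton_subset_iff.2 ⟨le_rfl, le_rfl⟩)

end UniformlyMeasurable

section Close

variable {x y : ℕ → ℝ} {N : ℕ} {δ a b : ℝ}

theorem preimage_Icc_diff_Iio_subset (hN : ∀ n ≥ N, |y n - x n| < δ) :
    y ⁻¹' Icc (a + δ) (b - δ) \ Iio N ⊆ x ⁻¹' Ioo a b := by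
  rintro n ⟨⟨ha, hb⟩, hn⟩
  have h := abs_lt.1 (hN n (not_lt.1 hn))
  exact ⟨by linarith [h.2], by linarith [h.1]⟩

theorem preimage_Icc_subset_union_Iio (hN : ∀ n ≥ N, |y n - x n| < δ) :
    x ⁻¹' Icc a b ⊆ y ⁻¹' Icc (a - δ) (b + δ) ∪ Iio N := by
  rintro n ⟨ha, hb⟩
  rcases lt_or_ge n N with hn | hn
  · exact Or.inr hn
  · have h := abs_lt.1 (hN n hn)
    exact Or.inl ⟨by linarith [h.1], by linarith [h.2]⟩

end Close

theorem unifMeasurable_of_close_general {Y : Set (Set ℕ)} {π : Set ℕ → ℝ}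
    (hY : IsQAlgebra Y) (hπ : IsDensity Y π)
    (y x : ℕ → ℝ) (hy01 : ∀ n, y n ∈ Set.Icc (0 : ℝ) 1)
    (hy : UnifMeasurable Y π y)
    (hclose : Tendsto (fun n => |y n - x n|) atTop (𝓝 0)) :
    UnifMeasurable Y π x := by
  intro a b ha hab hb I hI
  have hIoo : Ioo a b ⊆ I := by
    rcases hI with rfl | rfl | rfl | rfl
    exacts [Ioo_subset_Icc_self, Ioo_subset_Ico_self, Ioo_subset_Ioc_self, subset_rfl]
  have hIcc : I ⊆ Icc a b := by
    rcases hI with rfl | rfl | rfl | rfl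
    exacts [subset_rfl, Ico_subset_Icc_self, Ioc_subset_Icc_self, Ioo_subset_Icc_self]
  refine hπ.mem_and_eq_of_approx hY fun ε hε => ?_
  obtain ⟨N, hN⟩ := eventually_atTop.1 (hclose (Iio_mem_nhds (half_pos hε)))
  have hnull : IsNullSet Y π (Iio N) :=
    isNullSet_of_finite hY hπ (hy.isNullSet_singleton hY hπ hy01) (finite_Iio N)
  obtain ⟨h₁, hπ₁⟩ := hy.preimage_Icc hY hπ hy01 (a + ε / 2) (b - ε / 2)
  obtain ⟨h₂, hπ₂⟩ := hy.preimage_Icc hY hπ hy01 (a - ε / 2) (b + ε / 2)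
  obtain ⟨hA₁, hπA₁⟩ := hπ.diff_isNullSet hY h₁ hnull
  obtain ⟨hA₂, hπA₂⟩ := hπ.union_isNullSet hY h₂ hnull
  refine ⟨_, hA₁, _, hA₂, (preimage_Icc_diff_Iio_subset hN).trans (preimage_mono hIoo),
    (preimage_mono hIcc).trans (preimage_Icc_subset_union_Iio hN), ?_, ?_⟩
  · rw [hπA₁, hπ₁, min_eq_left (by linarith), max_eq_left (by linarith : 0 ≤ a + ε / 2)]
    linarith [le_max_left (b - ε / 2 - (a + ε / 2)) 0]
  · rw [hπA₂, hπ₂]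
    refine max_le ?_ (by linarith)
    linarith [min_le_left (b + ε / 2) 1, le_max_left (a - ε / 2) 0]

theorem unifMeasurable_of_close {Y : Set (Set ℕ)} {π : Set ℕ → ℝ}
    (hY : IsQAlgebra Y) (hπ : IsDensity Y π) (hD : HasDarboux Y π)
    (y x : ℕ → ℝ) (hy01 : ∀ n, y n ∈ Set.Icc (0 : ℝ) 1) (hx01 : ∀ n, x n ∈ Set.Icc (0 : ℝ) 1)
    (hy : UnifMeasurable Y π y)
    (hclose : Tendsto (fun n => |y n - x n|) atTop (𝓝 0)) :
    UnifMeasurable Y π x :=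
  unifMeasurable_of_close_general hY hπ y x hy01 hy hclose
end
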